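/- arXiv:2604.11673 — 2 statements merged into one kernel-verified Lean document; each statement's English description precedes it below -/
import Mathlib

section
/- Let n ≥ 3 and let a, b ∈ ℝ^n with Σ_{i=1}^n a_i = Σ_{j=1}^n b_j, and set λ_{ij} = exp(a_i + b_j) for i ≠ j. For α, β ∈ ℝ^n with Σ_{i=1}^n α_i = Σ_{j=1}^n β_j, define the population risk R(α, β) = Σ_{i≠j} [exp(α_i + β_j) − λ_{ij}·(α_i + β_j)]. Then R(α, β) ≥ R(a, b) for all such (α, β), with equality if and only if α = a and β = b. -/
/-!
Each summand `exp x - exp t * x` of the risk, with `t = a i + b j`, is a strictly convex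
function of `x = α i + β j` minimised exactly at `x = t` (tangent-line inequality for `exp`).
So `R a b ≤ R α β`, with equality only if `α i + β j = a i + b j` for all `i ≠ j`. With
`n ≥ 3` any two rows share a third column, which forces `α - a` to be a constant `c` and
`β - b` to be `-c`; the constraint `∑ α = ∑ β` then gives `c = 0`.
-/

open Real Finset

lemma exp_sub_exp_mul_le (t x : ℝ) : exp t - exp t * t ≤ exp x - exp t * x := by
  have h := mul_le_mul_of_nonneg_left (add_one_le_exp (x - t)) (exp_pos t).le
  rw [← exp_add, add_sub_cancel] at h
  linarith

lemma exp_sub_exp_mul_lt {t x : ℝ} (hxt : x ≠ t) : exp t - exp t * t < exp x - exp t * x := by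
  have h := mul_lt_mul_of_pos_left (add_one_lt_exp (sub_ne_zero.mpr hxt)) (exp_pos t)
  rw [← exp_add, add_sub_cancel] at h
  linarith

lemma Fintype.exists_ne_ne_of_three_le_card {ι : Type*} [Fintype ι] [DecidableEq ι]
    (hι : 3 ≤ Fintype.card ι) (i i' : ι) : ∃ j, j ≠ i ∧ j ≠ i' := by
  have hcard : 1 < #(univ.erase i) := by
    rw [card_erase_of_mem (mem_univ i), card_univ]
    omega
  obtain ⟨j, hj, hji'⟩ := exists_mem_ne hcard i'
  exact ⟨j, ne_of_mem_erase hj, hji'⟩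

lemma eq_zero_of_add_eq_zero_of_ne {ι K : Type*} [Fintype ι] [DecidableEq ι] [Field K]
    [CharZero K] (hι : 3 ≤ Fintype.card ι) {u v : ι → K}
    (huv : ∀ i j, i ≠ j → u i + v j = 0) (hsum : ∑ i, u i = ∑ j, v j) :
    u = 0 ∧ v = 0 := by
  obtain ⟨i₀⟩ : Nonempty ι := Fintype.card_pos_iff.mp (by omega)
  have hu : ∀ i, u i = u i₀ := fun i => by
    obtain ⟨j, hji, hji₀⟩ := Fintype.exists_ne_ne_of_three_le_card hι i i₀
    linear_combination huv i j hji.symm - huv i₀ j hji₀.symm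
  have hv : ∀ j, v j = -u i₀ := fun j => by
    obtain ⟨i, hij, -⟩ := Fintype.exists_ne_ne_of_three_le_card hι j j
    linear_combination huv i j hij - hu i
  have hc : (Fintype.card ι : K) * u i₀ = 0 := by
    simp only [Fintype.sum_congr _ _ hu, Fintype.sum_congr _ _ hv, sum_const, card_univ,
      nsmul_eq_mul] at hsum
    linear_combination hsum / 2
  have hu₀ : u i₀ = 0 :=
    (mul_eq_zero.mp hc).resolve_left (Nat.cast_ne_zero.mpr (by omega))
  exact ⟨funext fun i => by simp [hu i, hu₀], funext fun j => by simp [hv j, hu₀]⟩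

/-- The true parameters `(a, b)` are the unique minimizer, among parameters
satisfying the identifiability constraint `∑ α = ∑ β`, of the population risk
`R(α, β) = ∑_{i≠j} [exp(α_i + β_j) − λ_{ij}(α_i + β_j)]` where
`λ_{ij} = exp(a_i + b_j)`. -/
theorem population_risk_unique_minimizer (n : ℕ) (hn : 3 ≤ n)
    (a b : Fin n → ℝ) (hab : ∑ i, a i = ∑ j, b j)
    (lam : Fin n → Fin n → ℝ)
    (hlam : ∀ i j : Fin n, i ≠ j → lam i j = Real.exp (a i + b j))
    (R : (Fin n → ℝ) → (Fin n → ℝ) → ℝ)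
    (hR : ∀ α β : Fin n → ℝ,
      R α β = ∑ i, ∑ j ∈ Finset.univ.filter (fun j => j ≠ i),
        (Real.exp (α i + β j) - lam i j * (α i + β j))) :
    ∀ α β : Fin n → ℝ, (∑ i, α i = ∑ j, β j) →
      R a b ≤ R α β ∧ (R α β = R a b ↔ α = a ∧ β = b) := by
  intro α β hαβ
  have hterm : ∀ i, ∀ j ∈ univ.filter (· ≠ i),
      exp (a i + b j) - lam i j * (a i + b j) ≤ exp (α i + β j) - lam i j * (α i + β j) :=
    fun i j hj => by
      rw [hlam i j (mem_filter.mp hj).2.symm]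
      exact exp_sub_exp_mul_le _ _
  have hle : R a b ≤ R α β := by
    rw [hR, hR]
    exact sum_le_sum fun i _ => sum_le_sum (hterm i)
  refine ⟨hle, fun heq => ?_, by rintro ⟨rfl, rfl⟩; rfl⟩
  by_contra hne
  obtain ⟨i, j, hij, hne⟩ : ∃ i j, i ≠ j ∧ α i + β j ≠ a i + b j := by
    by_contra! hoff
    have := eq_zero_of_add_eq_zero_of_ne (by simpa using hn) (u := α - a) (v := β - b)
      (fun i j hij => by simp only [Pi.sub_apply]; linarith [hoff i j hij])
      (by simp only [Pi.sub_apply, sum_sub_distrib, hαβ, hab])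
    exact hne ⟨sub_eq_zero.mp this.1, sub_eq_zero.mp this.2⟩
  have hlt : exp (a i + b j) - lam i j * (a i + b j) <
      exp (α i + β j) - lam i j * (α i + β j) := by
    rw [hlam i j hij]
    exact exp_sub_exp_mul_lt hne
  refine heq.not_gt ?_
  rw [hR, hR]
  exact sum_lt_sum (fun i _ => sum_le_sum (hterm i)) ⟨i, mem_univ i,
    sum_lt_sum (hterm i) ⟨j, mem_filter.mpr ⟨mem_univ j, hij.symm⟩, hlt⟩⟩
end

section
/- Let (X, d) be a metric space equipped with a Borel measure μ, let n ≥ 1, and let V_1, …, V_n be pairwise disjoint Borel sets with X = V_1 ∪ ⋯ ∪ V_n. Suppose there exist points x_1, …, x_n ∈ X, and constants C > 0 and h ≥ 0, such that μ(V_i) ≤ C/n for each i and d(y, x_i) ≤ h for every y ∈ V_i. Let g : X → ℝ be Lipschitz with constant b ≥ 0. Then ∫_X g(x)² dμ(x) ≤ (2C/n)·Σ_{i=1}^n g(x_i)² + 2C·b²·h². -/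
open MeasureTheory Real Finset

/-! Each `V i` lies in the ball of radius `h` about `x i`, so there the Lipschitz bound gives
`|g - g (x i)| ≤ b h` and hence `g² ≤ 2 (g (x i)² + b² h²)`. Integrating this
cellwise bound over the cover and using `μ (V i) ≤ C / n` yields the claim. -/

theorem sq_le_two_mul_sq_add_sq_of_abs_sub_le {u v ε : ℝ} (h : |u - v| ≤ ε) :
    u ^ 2 ≤ 2 * (v ^ 2 + ε ^ 2) := by
  have hsq : (u - v) ^ 2 ≤ ε ^ 2 := by
    rw [← sq_abs]
    exact pow_le_pow_left₀ (abs_nonneg _) h 2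
  calc u ^ 2 = (v + (u - v)) ^ 2 := by ring
    _ ≤ 2 * (v ^ 2 + (u - v) ^ 2) := add_sq_le
    _ ≤ 2 * (v ^ 2 + ε ^ 2) := by gcongr

theorem lintegral_le_tsum_mul_measure_of_iUnion_eq_univ {α ι : Type*} [MeasurableSpace α]
    [Countable ι] {μ : Measure α} {s : ι → Set α} (hs : ∀ i, MeasurableSet (s i))
    (hcover : ⋃ i, s i = Set.univ) {f : α → ENNReal} {c : ι → ENNReal}
    (hf : ∀ i, ∀ y ∈ s i, f y ≤ c i) :
    ∫⁻ y, f y ∂μ ≤ ∑' i, c i * μ (s i) := by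
  calc ∫⁻ y, f y ∂μ = ∫⁻ y in ⋃ i, s i, f y ∂μ := by rw [hcover, Measure.restrict_univ]
    _ ≤ ∑' i, ∫⁻ y in s i, f y ∂μ := lintegral_iUnion_le s f
    _ ≤ ∑' i, ∫⁻ _ in s i, c i ∂μ :=
        ENNReal.tsum_le_tsum fun i => setLIntegral_mono' (hs i) (hf i)
    _ = ∑' i, c i * μ (s i) := by simp only [setLIntegral_const]

theorem empirical_to_integrated_L2_general
    {X : Type*} [MetricSpace X] [MeasurableSpace X] [BorelSpace X]
    (μ : Measure X) (n : ℕ) (hn : 1 ≤ n)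
    (V : Fin n → Set X) (hVmeas : ∀ i, MeasurableSet (V i))
    (hVcover : (⋃ i, V i) = Set.univ)
    (x : Fin n → X) (C h : ℝ)
    (hVmu : ∀ i, μ (V i) ≤ ENNReal.ofReal (C / n))
    (hVfill : ∀ i, ∀ y ∈ V i, dist y (x i) ≤ h)
    (g : X → ℝ) (b : ℝ) (hb : 0 ≤ b)
    (hg : ∀ y z : X, |g y - g z| ≤ b * dist y z) :
    ∫⁻ y, ENNReal.ofReal ((g y) ^ 2) ∂μ ≤
      ENNReal.ofReal ((2 * C / n) * ∑ i, (g (x i)) ^ 2 + 2 * C * b ^ 2 * h ^ 2) := by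
  set K : Fin n → ℝ := fun i => 2 * (g (x i) ^ 2 + (b * h) ^ 2)
  have hK : ∀ i, 0 ≤ K i := fun i => by positivity
  have hcell : ∀ i, ∀ y ∈ V i, ENNReal.ofReal (g y ^ 2) ≤ ENNReal.ofReal (K i) :=
    fun i y hy => ENNReal.ofReal_le_ofReal <| sq_le_two_mul_sq_add_sq_of_abs_sub_le <|
      (hg y (x i)).trans (mul_le_mul_of_nonneg_left (hVfill i y hy) hb)
  have hsum : (∑ i, K i) * (C / n) = (2 * C / n) * ∑ i, g (x i) ^ 2 + 2 * C * b ^ 2 * h ^ 2 := by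
    have hn0 : (n : ℝ) ≠ 0 := Nat.cast_ne_zero.mpr (Nat.one_le_iff_ne_zero.mp hn)
    simp only [K, ← Finset.mul_sum, Finset.sum_add_distrib, Finset.sum_const, Finset.card_univ,
      Fintype.card_fin, nsmul_eq_mul]
    field_simp
  calc ∫⁻ y, ENNReal.ofReal (g y ^ 2) ∂μ ≤ ∑' i, ENNReal.ofReal (K i) * μ (V i) :=
        lintegral_le_tsum_mul_measure_of_iUnion_eq_univ hVmeas hVcover hcell
    _ ≤ ∑ i, ENNReal.ofReal (K i) * ENNReal.ofReal (C / n) := by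
        rw [tsum_fintype]
        gcongr with i
        exact hVmu i
    _ = ENNReal.ofReal ((∑ i, K i) * (C / n)) := by
        rw [← Finset.sum_mul, ENNReal.ofReal_mul (Finset.sum_nonneg fun i _ => hK i),
          ENNReal.ofReal_sum_of_nonneg fun i _ => hK i]
    _ = _ := by rw [hsum]

/-- Transfer from empirical to integrated L2 norm: if `X` is partitioned into
cells `V_i` of measure at most `C/n`, each within distance `h` of its center
`x_i`, and `g` is `b`-Lipschitz, then
`∫ g² dμ ≤ (2C/n) ∑_i g(x_i)² + 2C b² h²`. -/
theorem empirical_to_integrated_L2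
    {X : Type*} [MetricSpace X] [MeasurableSpace X] [BorelSpace X]
    (μ : Measure X) (n : ℕ) (hn : 1 ≤ n)
    (V : Fin n → Set X) (hVmeas : ∀ i, MeasurableSet (V i))
    (hVdisj : Pairwise (Function.onFun Disjoint V))
    (hVcover : (⋃ i, V i) = Set.univ)
    (x : Fin n → X) (C h : ℝ) (hC : 0 < C) (hh : 0 ≤ h)
    (hVmu : ∀ i, μ (V i) ≤ ENNReal.ofReal (C / n))
    (hVfill : ∀ i, ∀ y ∈ V i, dist y (x i) ≤ h)
    (g : X → ℝ) (b : ℝ) (hb : 0 ≤ b)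
    (hg : ∀ y z : X, |g y - g z| ≤ b * dist y z) :
    ∫⁻ y, ENNReal.ofReal ((g y) ^ 2) ∂μ ≤
      ENNReal.ofReal ((2 * C / n) * ∑ i, (g (x i)) ^ 2 + 2 * C * b ^ 2 * h ^ 2) :=
  empirical_to_integrated_L2_general μ n hn V hVmeas hVcover x C h hVmu hVfill g b hb hg
end
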